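/- For t ≥ 2, the colon ideal (J : x_2^{t−1} x_3^t ⋯ x_n^t) equals ⟨x_1, x_2⟩, where J = ⟨x^a : a ∈ Δ_{n,t}⟩; hence ⟨x_1,x_2⟩ is an associated prime of R/J, and therefore ⟨x_1,x_2,x_3⟩ is an embedded prime of J. -/

import Mathlib

/-!
Write `w` for the exponent of `x_2^{t-1} x_3^t ⋯ x_n^t`. Since `J` is a monomial ideal, a monomial
`x^d` lies in `(J : x^w)` iff `a ≤ d + w` for some `a ∈ Δ_{n,t}`. If `d_1 ≥ 1`, take
`a = (1, t-1, t, …, t)`, whose entries lie in `[1, t]` and sum to `t(n-1)`; if `d_2 ≥ 1`, take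
`a = (0, t, …, t)`. If `d_1 = d_2 = 0`, the zero first entry of `d + w` excludes every other `a`,
and `(0, t, …, t)` fails at the second entry `t > t - 1`. So the colon is the prime
`⟨x_1, x_2⟩`, which is therefore the annihilator of the class of `x^w` in `R/J`, hence an associated
prime, strictly below `⟨x_1, x_2, x_3⟩`.
-/

open MvPolynomial Finset

/-- The set `Δ_{n,t}`. -/
def Delta (n t : ℕ) : Set (Fin n → ℕ) :=
  {a | (∀ i, 1 ≤ a i ∧ a i ≤ t) ∧ ∑ i, a i = t * (n - 1)} ∪
  {a | ∃ i : Fin n, a = fun j => if j = i then 0 else t}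

theorem Ideal.isAssociatedPrime_quotient_of_colon_eq {R : Type*} [CommRing R] {I P : Ideal R}
    (hP : P.IsPrime) {x : R} (h : I.colon (Ideal.span {x}) = P) :
    IsAssociatedPrime P (R ⧸ I) := by
  refine ⟨hP, Ideal.Quotient.mk I x, ?_⟩
  have hcolon : (⊥ : Submodule R (R ⧸ I)).colon {Ideal.Quotient.mk I x} = P := by
    ext r
    rw [Submodule.mem_colon_singleton, Submodule.mem_bot, Algebra.smul_def,
      Ideal.Quotient.algebraMap_eq, ← map_mul, Ideal.Quotient.eq_zero_iff_mem,
      ← Ideal.mem_colon_span_singleton, h]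
  rw [hcolon, hP.radical]

namespace MvPolynomial

variable {σ R : Type*}

theorem prod_X_pow_eq_monomial_of_fintype [CommSemiring R] [Fintype σ] (s : σ →₀ ℕ) :
    ∏ i, (X i : MvPolynomial σ R) ^ s i = monomial s 1 := by
  rw [monomial_eq, C_1, one_mul, Finsupp.prod_fintype _ _ fun _ => pow_zero _]

theorem setOf_eq_prod_X_pow_eq_image_monomial [CommSemiring R] [Fintype σ] (D : Set (σ → ℕ)) :
    {m | ∃ a ∈ D, m = ∏ i, (X i : MvPolynomial σ R) ^ a i} =
      (fun s => monomial s 1) '' {s : σ →₀ ℕ | ⇑s ∈ D} := by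
  ext m
  constructor
  · rintro ⟨a, ha, rfl⟩
    exact ⟨Finsupp.equivFunOnFinite.symm a, ha, (prod_X_pow_eq_monomial_of_fintype _).symm⟩
  · rintro ⟨s, hs, rfl⟩
    exact ⟨s, hs, (prod_X_pow_eq_monomial_of_fintype s).symm⟩

theorem mem_span_monomial_image_colon_iff [CommSemiring R] {S : Set (σ →₀ ℕ)} {c : σ →₀ ℕ}
    {f : MvPolynomial σ R} :
    f ∈ (Ideal.span ((fun s => monomial s (1 : R)) '' S)).colon
        (Ideal.span {monomial c (1 : R)}) ↔
      ∀ d ∈ f.support, ∃ s ∈ S, s ≤ d + c := by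
  classical
  rw [Ideal.mem_colon_span_singleton, mem_ideal_span_monomial_image]
  constructor
  · intro h d hd
    refine h (d + c) ?_
    rwa [mem_support_iff, coeff_mul_monomial, mul_one, ← mem_support_iff]
  · intro h m hm
    obtain ⟨d, hd, c', hc', rfl⟩ := Finset.mem_add.mp (support_mul f _ hm)
    rw [Finset.mem_singleton.mp (support_monomial_subset hc')]
    exact h d hd

theorem X_mem_span_X_image_iff [CommSemiring R] [Nontrivial R] {s : Set σ} {i : σ} :
    (X i : MvPolynomial σ R) ∈ Ideal.span (X '' s) ↔ i ∈ s := by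
  classical
  refine ⟨fun h => ?_, fun h => Ideal.subset_span ⟨i, h, rfl⟩⟩
  obtain ⟨j, hj, hij⟩ :=
    mem_ideal_span_X_image.mp h _ (by rw [support_X]; exact mem_singleton_self _)
  rw [Finsupp.single_apply] at hij
  split_ifs at hij with hji
  · exact hji ▸ hj
  · exact absurd rfl hij

theorem span_X_image_lt_span_X_image [CommSemiring R] [Nontrivial R] {s t : Set σ} (hst : s ⊆ t)
    {i : σ} (hit : i ∈ t) (his : i ∉ s) :
    Ideal.span (X '' s : Set (MvPolynomial σ R)) < Ideal.span (X '' t) :=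
  lt_of_le_not_ge (Ideal.span_mono (Set.image_mono hst)) fun h =>
    his (X_mem_span_X_image_iff.mp (h (X_mem_span_X_image_iff.mpr hit)))

theorem isPrime_span_X_image [CommRing R] [IsDomain R] (s : Set σ) :
    (Ideal.span (X '' s : Set (MvPolynomial σ R))).IsPrime := by
  classical
  set I := Ideal.span (X '' s : Set (MvPolynomial σ R))
  set φ : MvPolynomial σ R →ₐ[R] MvPolynomial σ R := aeval fun i => if i ∈ s then 0 else X i
  have hmk : (Ideal.Quotient.mkₐ R I).comp φ = Ideal.Quotient.mkₐ R I := by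
    refine algHom_ext fun i => ?_
    by_cases hi : i ∈ s
    · rw [AlgHom.comp_apply, aeval_X, if_pos hi, map_zero, Ideal.Quotient.mkₐ_eq_mk, eq_comm,
        Ideal.Quotient.eq_zero_iff_mem]
      exact Ideal.subset_span ⟨i, hi, rfl⟩
    · simp [φ, hi]
  suffices RingHom.ker φ = I from this ▸ RingHom.ker_isPrime φ
  refine le_antisymm (fun f hf => ?_) (Ideal.span_le.mpr ?_)
  · rw [← Ideal.Quotient.eq_zero_iff_mem, ← Ideal.Quotient.mkₐ_eq_mk R, ← hmk]
    simp [(RingHom.mem_ker).mp hf]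
  · rintro _ ⟨i, hi, rfl⟩
    simp [φ, hi]

end MvPolynomial

section ColonExponent

variable {n t : ℕ} {i j : Fin n}

/-- The exponent `w` above, with `x_i, x_j` in the roles of `x_1, x_2`. -/
noncomputable def colonExponent (t : ℕ) (i j : Fin n) : Fin n →₀ ℕ :=
  Finsupp.equivFunOnFinite.symm fun l => if l = i then 0 else if l = j then t - 1 else t

@[simp]
theorem colonExponent_apply (l : Fin n) :
    colonExponent t i j l = if l = i then 0 else if l = j then t - 1 else t := rfl

theorem single_left_add_colonExponent_mem_Delta (hij : i ≠ j) (ht : 2 ≤ t) :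
    ⇑(Finsupp.single i 1 + colonExponent t i j : Fin n →₀ ℕ) ∈ Delta n t := by
  set a := ⇑(Finsupp.single i 1 + colonExponent t i j : Fin n →₀ ℕ)
  have ha : ∀ l, a l = if l = i then 1 else if l = j then t - 1 else t := fun l => by
    simp only [a, Finsupp.coe_add, Pi.add_apply, Finsupp.single_apply, colonExponent_apply]
    split_ifs <;> grind
  have hconst : ∀ l, a l + (if l = i then t - 1 else 0) + (if l = j then 1 else 0) = t :=
    fun l => by rw [ha]; split_ifs <;> omega
  have hsum : ∑ l, a l + (t - 1) + 1 = n * t := by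
    simpa [Finset.sum_add_distrib] using Finset.sum_congr rfl fun l (_ : l ∈ univ) => hconst l
  refine Or.inl ⟨fun l => by rw [ha]; split_ifs <;> omega, ?_⟩
  rw [Nat.mul_sub_one, mul_comm]
  omega

theorem single_right_add_colonExponent_mem_Delta (hij : i ≠ j) (ht : 1 ≤ t) :
    ⇑(Finsupp.single j 1 + colonExponent t i j : Fin n →₀ ℕ) ∈ Delta n t := by
  refine Or.inr ⟨i, funext fun l => ?_⟩
  simp only [Finsupp.coe_add, Pi.add_apply, Finsupp.single_apply, colonExponent_apply]
  split_ifs <;> grind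

theorem not_le_add_colonExponent (hij : i ≠ j) (ht : 1 ≤ t) {s d : Fin n →₀ ℕ}
    (hs : ⇑s ∈ Delta n t) (hdi : d i = 0) (hdj : d j = 0) : ¬ s ≤ d + colonExponent t i j := by
  intro hle
  have hle' : ∀ l, s l ≤ d l + colonExponent t i j l := fun l => hle l
  rcases hs with ⟨hbounds, -⟩ | ⟨l, hl⟩
  · simpa [hdi] using (hbounds i).1.trans (hle' i)
  · have hs : ∀ m, s m = if m = l then 0 else t := congrFun hl
    by_cases hli : l = i
    · have hj := hle' j
      simp only [hs, colonExponent_apply, hdj, hli, if_neg hij.symm, if_true] at hj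
      omega
    · have hi := hle' i
      simp only [hs, colonExponent_apply, hdi, if_neg (Ne.symm hli), if_true] at hi
      omega

theorem span_Delta_colon_monomial_colonExponent (k : Type*) [CommSemiring k] (hij : i ≠ j)
    (ht : 2 ≤ t) :
    (Ideal.span ((fun s => monomial s (1 : k)) '' {s : Fin n →₀ ℕ | ⇑s ∈ Delta n t})).colon
        (Ideal.span {monomial (colonExponent t i j) (1 : k)}) =
      Ideal.span (X '' {i, j}) := by
  ext f
  rw [mem_span_monomial_image_colon_iff, mem_ideal_span_X_image]
  refine forall₂_congr fun d _ => ⟨fun ⟨s, hs, hle⟩ => ?_, fun ⟨l, hl, hdl⟩ => ?_⟩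
  · by_contra! hd
    exact not_le_add_colonExponent hij (by omega) hs (hd i (by simp)) (hd j (by simp)) hle
  · have hle : Finsupp.single l 1 ≤ d := Finsupp.single_le_iff.mpr (Nat.pos_of_ne_zero hdl)
    rcases hl with rfl | rfl
    · exact ⟨_, single_left_add_colonExponent_mem_Delta hij ht, add_le_add_left hle _⟩
    · exact ⟨_, single_right_add_colonExponent_mem_Delta hij (by omega), add_le_add_left hle _⟩

theorem X_pow_mul_prod_X_pow_eq_monomial_colonExponent (k : Type*) [CommSemiring k]
    (hij : i ≠ j) :
    X j ^ (t - 1) * ∏ l ∈ univ.filter (fun l => l ≠ i ∧ l ≠ j), (X l : MvPolynomial (Fin n) k) ^ t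
      = monomial (colonExponent t i j) 1 := by
  rw [prod_X_pow, X_pow_eq_monomial, monomial_mul, one_mul]
  congr 2
  ext l
  simp only [Finsupp.coe_add, Pi.add_apply, Finsupp.single_apply, Finsupp.indicator_apply,
    colonExponent_apply, mem_filter, mem_univ, true_and]
  split_ifs <;> grind

end ColonExponent

/-- For `t ≥ 2`, `(J : x_2^{t−1} x_3^t ⋯ x_n^t) = ⟨x_1,x_2⟩`, where
`J = ⟨x^a : a ∈ Δ_{n,t}⟩`; hence `⟨x_1,x_2⟩` is an associated prime of `R/J`,
and — combined with the fact that `⟨x_1,x_2,x_3⟩ ∈ Ass(R/J)` — the prime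
`⟨x_1,x_2,x_3⟩` is an embedded prime of `J` (an associated prime strictly
containing another associated prime).  Indices are `0`-based. -/
theorem stmt_7 (k : Type*) [Field k] (n t : ℕ) (hn : 3 ≤ n) (ht : 2 ≤ t) :
    (Ideal.span {m | ∃ a ∈ Delta n t,
        m = ∏ i, (X i : MvPolynomial (Fin n) k) ^ a i}).colon
      (Ideal.span {X (⟨1, by omega⟩ : Fin n) ^ (t - 1) *
        ∏ j ∈ Finset.univ.filter (fun j : Fin n => 2 ≤ (j : ℕ)),
          (X j : MvPolynomial (Fin n) k) ^ t})
      = Ideal.span {X (⟨0, by omega⟩ : Fin n),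
          (X (⟨1, by omega⟩ : Fin n) : MvPolynomial (Fin n) k)} ∧
    IsAssociatedPrime
      (Ideal.span {X (⟨0, by omega⟩ : Fin n),
        (X (⟨1, by omega⟩ : Fin n) : MvPolynomial (Fin n) k)})
      (MvPolynomial (Fin n) k ⧸ Ideal.span {m | ∃ a ∈ Delta n t,
        m = ∏ i, (X i : MvPolynomial (Fin n) k) ^ a i}) ∧
    (∃ Q : Ideal (MvPolynomial (Fin n) k),
      IsAssociatedPrime Q
        (MvPolynomial (Fin n) k ⧸ Ideal.span {m | ∃ a ∈ Delta n t,
          m = ∏ i, (X i : MvPolynomial (Fin n) k) ^ a i}) ∧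
      Q < Ideal.span {X (⟨0, by omega⟩ : Fin n), X ⟨1, by omega⟩,
        (X (⟨2, by omega⟩ : Fin n) : MvPolynomial (Fin n) k)}) := by
  set x₀ : Fin n := ⟨0, by omega⟩
  set x₁ : Fin n := ⟨1, by omega⟩
  set x₂ : Fin n := ⟨2, by omega⟩
  have h01 : x₀ ≠ x₁ := by simp [x₀, x₁, Fin.ext_iff]
  have hfilter : univ.filter (fun j : Fin n => 2 ≤ (j : ℕ)) =
      univ.filter (fun j => j ≠ x₀ ∧ j ≠ x₁) := by
    ext j
    simp [x₀, x₁, Fin.ext_iff]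
    omega
  have hcolon := span_Delta_colon_monomial_colonExponent k h01 ht
  have hass := Ideal.isAssociatedPrime_quotient_of_colon_eq (isPrime_span_X_image _) hcolon
  rw [Set.image_pair, ← setOf_eq_prod_X_pow_eq_image_monomial] at hass hcolon
  rw [← X_pow_mul_prod_X_pow_eq_monomial_colonExponent k h01, ← hfilter] at hcolon
  refine ⟨hcolon, hass, _, hass, ?_⟩
  rw [← Set.image_pair, show ({X x₀, X x₁, X x₂} : Set (MvPolynomial (Fin n) k)) =
    X '' {x₀, x₁, x₂} by simp [Set.image_insert_eq]]
  exact span_X_image_lt_span_X_image (i := x₂) (Set.insert_subset_insert (by simp)) (by simp)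
    (by simp [x₀, x₁, x₂, Fin.ext_iff])
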